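/- arXiv:2309.06952 — 2 statements merged into one kernel-verified Lean document; each statement's English description precedes it below -/
import Mathlib

section
/- Let X_t = σ ∫_0^t e^(-λ(t-s)) dW_s with λ, σ > 0 and fixed T > 0. Then Var[∫_0^T X_t^2 dt] ≤ C σ^4 / λ^3 for a constant C depending only on T, and moreover Var[∫_0^T X_t^2 dt] ∼ σ^4/λ^3 up to absolute constants as λ → ∞. -/
/-!
Both moment formulas are sums of exponentials in `s`, `t`, `|t - s|` and `t + s`, so after
splitting the inner integral at `s = t` the variance integrates in closed form: with `x = 2λT`,
`Var = σ⁴ (2x - 5 + 4(1 + x)e^{-x} + e^{-2x}) / (8λ⁴)`.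
Since `(1 + x)e^{-x} ≤ 1`, the bracket lies between `2x - 5` and `2x`, which gives
`Tσ⁴/(4λ³) ≤ Var ≤ Tσ⁴/(2λ³)`, the lower bound as soon as `2λT ≥ 5`.
-/

open MeasureTheory

/-- The variance of `∫₀ᵀ X_t² dt` for the Ornstein–Uhlenbeck process started at 0,
expressed through the moment formulas
`E[X_t²] = σ²(1-e^{-2λt})/(2λ)` and
`E[X_t²X_s²] = σ⁴(1/(2λ))²[1 - e^{-2λ(s∧t)} + 2e^{-2λ|t-s|} - 5e^{-2λ(s∨t)} + 3e^{-2λ(t+s)}]`. -/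
noncomputable def ouIntVar (l σ T : ℝ) : ℝ :=
  (∫ t in Set.Ioc (0 : ℝ) T, ∫ s in Set.Ioc (0 : ℝ) T,
    σ ^ 4 * (1 / (2 * l)) ^ 2 *
      (1 - Real.exp (-2 * l * min s t) + 2 * Real.exp (-2 * l * |t - s|)
        - 5 * Real.exp (-2 * l * max s t) + 3 * Real.exp (-2 * l * (t + s))))
  - (∫ t in Set.Ioc (0 : ℝ) T, σ ^ 2 / (2 * l) * (1 - Real.exp (-2 * l * t))) ^ 2

open Real Set intervalIntegral

section ExpDerivatives

variable (c t x : ℝ)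

lemma hasDerivAt_exp_const_mul :
    HasDerivAt (fun y => exp (c * y)) (c * exp (c * x)) x := by
  simpa [mul_comm] using ((hasDerivAt_id x).const_mul c).exp

lemma hasDerivAt_exp_const_mul_sub_left :
    HasDerivAt (fun y => exp (c * (t - y))) (-c * exp (c * (t - x))) x := by
  simpa [mul_comm] using (((hasDerivAt_id x).const_sub t).const_mul c).exp

lemma hasDerivAt_exp_const_mul_sub_right :
    HasDerivAt (fun y => exp (c * (y - t))) (c * exp (c * (x - t))) x := by
  simpa [mul_comm] using (((hasDerivAt_id x).sub_const t).const_mul c).exp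

lemma hasDerivAt_exp_const_mul_add_left :
    HasDerivAt (fun y => exp (c * (t + y))) (c * exp (c * (t + x))) x := by
  simpa [mul_comm] using (((hasDerivAt_id x).const_add t).const_mul c).exp

end ExpDerivatives

lemma integral_eq_sub_of_forall_hasDerivAt {f F : ℝ → ℝ} {a b : ℝ}
    (hF : ∀ x, HasDerivAt F (f x) x) (hf : Continuous f) : ∫ x in a..b, f x = F b - F a :=
  integral_eq_sub_of_hasDerivAt (fun x _ => hF x) (hf.intervalIntegrable _ _)

/-- `E[X_s² X_t²]` in units of `(σ²/(2λ))²`, with decay exponent `c = -2λ`. -/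
noncomputable def ouMomentKernel (c s t : ℝ) : ℝ :=
  1 - exp (c * min s t) + 2 * exp (c * |t - s|) - 5 * exp (c * max s t) + 3 * exp (c * (t + s))

section ClosedForm

variable {c : ℝ}

lemma integral_one_sub_exp_const_mul {T : ℝ} (hc : c ≠ 0) (hT : 0 ≤ T) :
    ∫ t in Ioc 0 T, (1 - exp (c * t)) = T - (exp (c * T) - 1) / c := by
  rw [← integral_of_le hT]
  have hF : ∀ x, HasDerivAt (fun t => t - exp (c * t) / c) (1 - exp (c * x)) x := fun x =>
    ((hasDerivAt_id x).sub ((hasDerivAt_exp_const_mul c x).div_const c)).congr_deriv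
      (by field_simp)
  rw [integral_eq_sub_of_forall_hasDerivAt hF (by fun_prop)]
  simp only [mul_zero, exp_zero]
  ring

lemma integral_ouMomentKernel_of_le {t : ℝ} (hc : c ≠ 0) (ht : 0 ≤ t) :
    ∫ s in 0..t, ouMomentKernel c s t =
      t - 5 * t * exp (c * t) + (3 * exp (c * (t + t)) - 2 * exp (c * t) - 1) / c := by
  have hF : ∀ x, HasDerivAt
      (fun s => s - exp (c * s) / c - 2 * exp (c * (t - s)) / c - 5 * exp (c * t) * s
        + 3 * exp (c * (t + s)) / c)
      (1 - exp (c * x) + 2 * exp (c * (t - x)) - 5 * exp (c * t) + 3 * exp (c * (t + x))) x :=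
    fun x => (((((hasDerivAt_id x).sub ((hasDerivAt_exp_const_mul c x).div_const c)).sub
      (((hasDerivAt_exp_const_mul_sub_left c t x).const_mul 2).div_const c)).sub
      ((hasDerivAt_id x).const_mul _)).add
      (((hasDerivAt_exp_const_mul_add_left c t x).const_mul 3).div_const c)).congr_deriv
      (by field_simp; ring)
  calc ∫ s in 0..t, ouMomentKernel c s t
      = ∫ s in 0..t, (1 - exp (c * s) + 2 * exp (c * (t - s)) - 5 * exp (c * t)
          + 3 * exp (c * (t + s))) := by
        refine integral_congr fun s hs => ?_
        rw [uIcc_of_le ht] at hs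
        simp only [ouMomentKernel, min_eq_left hs.2, max_eq_right hs.2,
          abs_of_nonneg (sub_nonneg.2 hs.2)]
    _ = _ := integral_eq_sub_of_forall_hasDerivAt hF (by fun_prop)
    _ = _ := by
        simp only [sub_zero, sub_self, add_zero, mul_zero, exp_zero]
        field_simp
        ring

lemma integral_ouMomentKernel_of_ge {t T : ℝ} (hc : c ≠ 0) (htT : t ≤ T) :
    ∫ s in t..T, ouMomentKernel c s t =
      (T - t) * (1 - exp (c * t)) + (2 * exp (c * (T - t)) - 2) / c
        - 5 * (exp (c * T) - exp (c * t)) / c + 3 * (exp (c * (t + T)) - exp (c * (t + t))) / c := by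
  have hF : ∀ x, HasDerivAt
      (fun s => s * (1 - exp (c * t)) + 2 * exp (c * (s - t)) / c - 5 * exp (c * s) / c
        + 3 * exp (c * (t + s)) / c)
      (1 - exp (c * t) + 2 * exp (c * (x - t)) - 5 * exp (c * x) + 3 * exp (c * (t + x))) x :=
    fun x => (((((hasDerivAt_id x).mul_const _).add
      (((hasDerivAt_exp_const_mul_sub_right c t x).const_mul 2).div_const c)).sub
      (((hasDerivAt_exp_const_mul c x).const_mul 5).div_const c)).add
      (((hasDerivAt_exp_const_mul_add_left c t x).const_mul 3).div_const c)).congr_deriv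
      (by field_simp)
  calc ∫ s in t..T, ouMomentKernel c s t
      = ∫ s in t..T, (1 - exp (c * t) + 2 * exp (c * (s - t)) - 5 * exp (c * s)
          + 3 * exp (c * (t + s))) := by
        refine integral_congr fun s hs => ?_
        rw [uIcc_of_le htT] at hs
        simp only [ouMomentKernel, min_eq_right hs.1, max_eq_left hs.1,
          abs_of_nonpos (sub_nonpos.2 hs.1), neg_sub]
    _ = _ := integral_eq_sub_of_forall_hasDerivAt hF (by fun_prop)
    _ = _ := by
        simp only [sub_self, mul_zero, exp_zero]
        field_simp
        ring

lemma integral_ouMomentKernel {t T : ℝ} (hc : c ≠ 0) (ht : 0 ≤ t) (htT : t ≤ T) :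
    ∫ s in Ioc 0 T, ouMomentKernel c s t =
      T - (T + 4 * t) * exp (c * t) + (3 * exp (c * t) - 3 + 2 * exp (c * (T - t))
        - 5 * exp (c * T) + 3 * exp (c * T) * exp (c * t)) / c := by
  have hk : Continuous (ouMomentKernel c · t) := by unfold ouMomentKernel; fun_prop
  rw [← integral_of_le (ht.trans htT), ← integral_add_adjacent_intervals
    (hk.intervalIntegrable 0 t) (hk.intervalIntegrable t T), integral_ouMomentKernel_of_le hc ht,
    integral_ouMomentKernel_of_ge hc htT, mul_add c t T, mul_add c t t, exp_add, exp_add]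
  field_simp
  ring

lemma integral_integral_ouMomentKernel {T : ℝ} (hc : c ≠ 0) (hT : 0 ≤ T) :
    ∫ t in Ioc 0 T, ∫ s in Ioc 0 T, ouMomentKernel c s t =
      T ^ 2 - 2 * T * (1 + 5 * exp (c * T)) / c
        + 3 * (exp (c * T) ^ 2 + 2 * exp (c * T) - 3) / c ^ 2 := by
  set K := exp (c * T) with hK
  have hH : ∀ x, HasDerivAt
      (fun t => (T - (3 + 5 * K) / c) * t + ((7 + 3 * K) / c ^ 2 - (T + 4 * t) / c) * exp (c * t)
        - 2 * exp (c * (T - t)) / c ^ 2)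
      (T - (T + 4 * x) * exp (c * x) + (3 * exp (c * x) - 3 + 2 * exp (c * (T - x))
        - 5 * K + 3 * K * exp (c * x)) / c) x :=
    fun x => by
      have hcoef := ((((hasDerivAt_id x).const_mul 4).const_add T).div_const c).const_sub
        ((7 + 3 * K) / c ^ 2)
      exact ((((hasDerivAt_id x).const_mul _).add (hcoef.mul (hasDerivAt_exp_const_mul c x))).sub
        (((hasDerivAt_exp_const_mul_sub_left c T x).const_mul 2).div_const (c ^ 2))).congr_deriv
        (by simp only [id_eq]; field_simp; ring)
  rw [← integral_of_le hT]
  calc ∫ t in 0..T, ∫ s in Ioc 0 T, ouMomentKernel c s t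
      = ∫ t in 0..T, (T - (T + 4 * t) * exp (c * t) + (3 * exp (c * t) - 3
          + 2 * exp (c * (T - t)) - 5 * K + 3 * K * exp (c * t)) / c) := by
        refine integral_congr fun t ht => ?_
        rw [uIcc_of_le hT] at ht
        exact integral_ouMomentKernel hc ht.1 ht.2
    _ = _ := integral_eq_sub_of_forall_hasDerivAt hH (by fun_prop)
    _ = _ := by
        simp only [sub_zero, sub_self, mul_zero, exp_zero, hK]
        field_simp
        ring

end ClosedForm

noncomputable def ouVarShape (x : ℝ) : ℝ :=
  2 * x - 5 + 4 * (1 + x) * exp (-x) + exp (-x) ^ 2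

lemma ouIntVar_eq {l : ℝ} (σ : ℝ) {T : ℝ} (hl : 0 < l) (hT : 0 ≤ T) :
    ouIntVar l σ T = σ ^ 4 * ouVarShape (2 * l * T) / (8 * l ^ 4) := by
  have hc : -2 * l ≠ 0 := by linarith
  have hvar := integral_integral_ouMomentKernel hc hT
  have hmean := integral_one_sub_exp_const_mul hc hT
  simp only [ouMomentKernel] at hvar
  unfold ouIntVar ouVarShape
  simp only [MeasureTheory.integral_const_mul]
  rw [hvar, hmean, show -(2 * l * T) = -2 * l * T by ring]
  field_simp
  ring

lemma one_add_mul_exp_neg_le_one (x : ℝ) : (1 + x) * exp (-x) ≤ 1 :=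
  calc (1 + x) * exp (-x) ≤ exp x * exp (-x) := by gcongr; linarith [add_one_le_exp x]
    _ = 1 := by rw [← exp_add, add_neg_cancel, exp_zero]

lemma ouVarShape_le {x : ℝ} (hx : 0 ≤ x) : ouVarShape x ≤ 2 * x := by
  have h1 := one_add_mul_exp_neg_le_one x
  have h2 : exp (-x) ≤ 1 := exp_le_one_iff.2 (by linarith)
  have h3 := exp_pos (-x)
  unfold ouVarShape
  nlinarith

lemma two_mul_sub_five_le_ouVarShape {x : ℝ} (hx : 0 ≤ x) : 2 * x - 5 ≤ ouVarShape x := by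
  have : 0 ≤ 4 * (1 + x) * exp (-x) + exp (-x) ^ 2 := by positivity
  unfold ouVarShape
  linarith

lemma ouIntVar_le {l : ℝ} (σ : ℝ) {T : ℝ} (hl : 0 < l) (hT : 0 ≤ T) :
    ouIntVar l σ T ≤ T / 2 * σ ^ 4 / l ^ 3 :=
  calc ouIntVar l σ T = σ ^ 4 * ouVarShape (2 * l * T) / (8 * l ^ 4) := ouIntVar_eq σ hl hT
    _ ≤ σ ^ 4 * (2 * (2 * l * T)) / (8 * l ^ 4) := by gcongr; exact ouVarShape_le (by positivity)
    _ = T / 2 * σ ^ 4 / l ^ 3 := by field_simp; ring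

lemma le_ouIntVar {l : ℝ} (σ : ℝ) {T : ℝ} (hT : 0 < T) (hl : 5 / (2 * T) ≤ l) :
    T / 4 * σ ^ 4 / l ^ 3 ≤ ouIntVar l σ T := by
  have hl₀ : 0 < l := (by positivity : 0 < 5 / (2 * T)).trans_le hl
  have hx : 5 ≤ 2 * l * T := by rw [div_le_iff₀ (by positivity)] at hl; linarith
  calc T / 4 * σ ^ 4 / l ^ 3 = σ ^ 4 * (2 * l * T) / (8 * l ^ 4) := by field_simp; ring
    _ ≤ σ ^ 4 * ouVarShape (2 * l * T) / (8 * l ^ 4) := by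
        gcongr
        linarith [two_mul_sub_five_le_ouVarShape (by positivity : 0 ≤ 2 * l * T)]
    _ = ouIntVar l σ T := (ouIntVar_eq σ hl₀ hT.le).symm

/-- `Var[∫₀ᵀ X_t² dt] ≤ C σ⁴/λ³` with `C` depending only on `T`, and for large `λ`
it is comparable to `σ⁴/λ³` up to constants. -/
theorem stmt6 (T : ℝ) (hT : 0 < T) :
    (∃ C : ℝ, 0 < C ∧ ∀ l σ : ℝ, 0 < l → 0 < σ →
      ouIntVar l σ T ≤ C * σ ^ 4 / l ^ 3) ∧
    (∃ c C l₀ : ℝ, 0 < c ∧ 0 < C ∧ 0 < l₀ ∧ ∀ l σ : ℝ, l₀ ≤ l → 0 < σ →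
      c * σ ^ 4 / l ^ 3 ≤ ouIntVar l σ T ∧ ouIntVar l σ T ≤ C * σ ^ 4 / l ^ 3) := by
  refine ⟨⟨T / 2, by positivity, fun l σ hl _ => ouIntVar_le σ hl hT.le⟩,
    T / 4, T / 2, 5 / (2 * T), by positivity, by positivity, by positivity, fun l σ hl _ => ?_⟩
  have hl₀ : 0 < l := (by positivity : 0 < 5 / (2 * T)).trans_le hl
  exact ⟨le_ouIntVar σ hT hl, ouIntVar_le σ hl₀ hT.le⟩
end

section
/- (Law of large numbers for independent sequences) Let (ξ_n) be a sequence of independent real random variables with finite variances and (b_n) an increasing sequence of positive reals with b_n → ∞ such that Σ_n Var(ξ_n)/b_n^2 < ∞. Then (Σ_{k=1}^n (ξ_k - E ξ_k))/b_n → 0 almost surely. -/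
/-!
Kolmogorov's criterion: the partial sums of the independent centred variables
`(ξ_k - E ξ_k)/b_k` form a martingale whose second moments are bounded by `∑ Var(ξ_k)/b_k²`,
so by the martingale convergence theorem the series `∑ (ξ_k - E ξ_k)/b_k` converges almost
surely. Kronecker's lemma turns convergence of `∑ u_k/b_k` into `(∑_{k<n} u_k)/b_n → 0`; it
follows from Abel summation and a Toeplitz (weighted Cesàro) argument with weights
`b_{k+1} - b_k`.
-/

open MeasureTheory ProbabilityTheory Filter Finset Asymptotics Topology
open scoped NNReal

theorem isLittleO_sum_range_of_tendsto_sum_range_div {b u : ℕ → ℝ} (hmono : Monotone b)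
    (hb : ∀ n, 0 < b n) (hbtop : Tendsto b atTop atTop) {L : ℝ}
    (h : Tendsto (fun n => ∑ k ∈ range n, u k / b k) atTop (𝓝 L)) :
    (fun n => ∑ k ∈ range n, u k) =o[atTop] b := by
  set s : ℕ → ℝ := fun n => ∑ k ∈ range n, u k / b k
  set w : ℕ → ℝ := fun k => b (k + 1) - b k
  have abel : ∀ n, ∑ k ∈ range n, u k
      = b n * (s n - L) + L * b 0 - ∑ k ∈ range n, w k * (s (k + 1) - L) := by
    intro n
    induction n with
    | zero => simp only [s, range_zero, sum_empty]; ring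
    | succ n ih =>
      have hs : s (n + 1) = s n + u n / b n := sum_range_succ _ _
      rw [sum_range_succ, ih, sum_range_succ, hs]
      field_simp [(hb n).ne']
      ring
  have hconst (c : ℝ) : (fun _ : ℕ => c) =o[atTop] b :=
    isLittleO_const_left.2 (Or.inr (tendsto_norm_atTop_atTop.comp hbtop))
  have hlim : (fun n => b n * (s n - L)) =o[atTop] b := by
    simpa using (isBigO_refl b atTop).mul_isLittleO
      ((isLittleO_one_iff ℝ).2 (tendsto_sub_nhds_zero_iff.2 h))
  have hweighted : (fun n => ∑ k ∈ range n, w k * (s (k + 1) - L)) =o[atTop] b := by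
    have hw : 0 ≤ w := fun k => sub_nonneg.2 (hmono k.le_succ)
    have hsum_w (n : ℕ) : ∑ k ∈ range n, w k = b n - b 0 := sum_range_sub b n
    have he : (fun k => w k * (s (k + 1) - L)) =o[atTop] w := by
      simpa using (isBigO_refl w atTop).mul_isLittleO
        ((isLittleO_one_iff ℝ).2 (tendsto_sub_nhds_zero_iff.2 (h.comp (tendsto_add_atTop_nat 1))))
    refine (he.sum_range hw ?_).trans_isBigO ?_
    · simpa only [hsum_w, sub_eq_add_neg] using tendsto_atTop_add_const_right _ (-b 0) hbtop
    · simpa only [hsum_w] using (isBigO_refl b atTop).sub (hconst (b 0)).isBigO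
  exact ((hlim.add (hconst _)).sub hweighted).congr_left fun n => (abel n).symm

section

variable {Ω : Type*} {m : MeasurableSpace Ω} {μ : Measure Ω}

theorem eLpNorm_two_eq_ofReal_sqrt_variance {X : Ω → ℝ} (hX : MemLp X 2 μ) (h0 : μ[X] = 0) :
    eLpNorm X 2 μ = ENNReal.ofReal √(Var[X; μ]) := by
  rw [hX.eLpNorm_eq_integral_rpow_norm two_ne_zero ENNReal.ofNat_ne_top,
    variance_of_integral_eq_zero hX.aemeasurable h0, Real.sqrt_eq_rpow]
  norm_num [Real.norm_eq_abs, sq_abs]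

theorem MeasureTheory.Submartingale.exists_ae_tendsto_of_bdd_eLpNorm [IsProbabilityMeasure μ]
    {ℱ : Filtration ℕ m} {f : ℕ → Ω → ℝ} {p : ENNReal} {R : ℝ≥0} (hf : Submartingale f ℱ μ)
    (hp : 1 ≤ p) (hbdd : ∀ n, eLpNorm (f n) p μ ≤ R) :
    ∀ᵐ ω ∂μ, ∃ c, Tendsto (fun n => f n ω) atTop (𝓝 c) :=
  hf.exists_ae_tendsto_of_bdd fun n =>
    (eLpNorm_le_eLpNorm_of_exponent_le hp (hf.integrable n).aestronglyMeasurable).trans (hbdd n)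

theorem ProbabilityTheory.iIndepFun.martingale_sum_range_succ {Y : ℕ → Ω → ℝ}
    (hmeas : ∀ n, StronglyMeasurable (Y n))
    (hint : ∀ n, Integrable (Y n) μ) (hindep : iIndepFun Y μ) (hmean : ∀ n, μ[Y n] = 0) :
    Martingale (fun n => ∑ k ∈ range (n + 1), Y k) (Filtration.natural Y hmeas) μ := by
  have := hindep.isProbabilityMeasure
  refine martingale_of_condExp_sub_eq_zero_nat (fun n => ?_)
    (fun n => integrable_finsetSum' _ fun k _ => hint k) fun n => ?_
  · refine Finset.stronglyMeasurable_sum _ fun k hk => ?_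
    exact (Filtration.stronglyAdapted_natural hmeas k).mono
      ((Filtration.natural Y hmeas).mono (Nat.lt_succ_iff.mp (mem_range.1 hk)))
  · rw [sum_range_succ, add_sub_cancel_left]
    exact (hindep.condExp_natural_ae_eq_of_lt hmeas n.lt_succ_self).trans
      (by simp only [hmean]; rfl)

theorem ProbabilityTheory.iIndepFun.ae_exists_tendsto_sum_of_summable_variance {Y : ℕ → Ω → ℝ}
    (hmeas : ∀ n, Measurable (Y n)) (hL2 : ∀ n, MemLp (Y n) 2 μ) (hindep : iIndepFun Y μ)
    (hmean : ∀ n, μ[Y n] = 0) (hsum : Summable fun n => Var[Y n; μ]) :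
    ∀ᵐ ω ∂μ, ∃ c, Tendsto (fun n => ∑ k ∈ range n, Y k ω) atTop (𝓝 c) := by
  have := hindep.isProbabilityMeasure
  set S : ℕ → Ω → ℝ := fun n => ∑ k ∈ range (n + 1), Y k
  have hvar (n : ℕ) : Var[S n; μ] ≤ ∑' k, Var[Y k; μ] := by
    rw [IndepFun.variance_sum (fun k _ => hL2 k) fun i _ j _ hij => hindep.indepFun hij]
    exact hsum.sum_le_tsum _ fun k _ => variance_nonneg _ _
  have hbdd (n : ℕ) : eLpNorm (S n) 2 μ ≤ (√(∑' k, Var[Y k; μ])).toNNReal := by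
    have hmean_S : μ[S n] = 0 := by
      simp [S, integral_finsetSum _ fun k _ => (hL2 k).integrable one_le_two, hmean]
    rw [eLpNorm_two_eq_ofReal_sqrt_variance (memLp_finsetSum' _ fun k _ => hL2 k) hmean_S]
    exact ENNReal.ofReal_le_ofReal (Real.sqrt_le_sqrt (hvar n))
  filter_upwards [(hindep.martingale_sum_range_succ (fun n => (hmeas n).stronglyMeasurable)
    (fun n => (hL2 n).integrable one_le_two) hmean).submartingale.exists_ae_tendsto_of_bdd_eLpNorm
    one_le_two hbdd] with ω ⟨c, hc⟩
  refine ⟨c, (tendsto_add_atTop_iff_nat 1).1 ?_⟩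
  simpa [S] using hc

end

theorem stmt9_general {Ω : Type*} [MeasurableSpace Ω] (μ : Measure Ω)
    (ξ : ℕ → Ω → ℝ) (hmeas : ∀ n, Measurable (ξ n))
    (hL2 : ∀ n, MemLp (ξ n) 2 μ)
    (hindep : iIndepFun ξ μ)
    (b : ℕ → ℝ) (hmono : Monotone b) (hbpos : ∀ n, 0 < b n)
    (hbtop : Tendsto b atTop atTop)
    (hsum : Summable fun n => variance (ξ n) μ / (b n) ^ 2) :
    ∀ᵐ ω ∂μ, Tendsto
      (fun n => (∑ k ∈ Finset.range n, (ξ k ω - μ[ξ k])) / b n) atTop (nhds 0) := by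
  have := hindep.isProbabilityMeasure
  set Y : ℕ → Ω → ℝ := fun k ω => (ξ k ω - μ[ξ k]) / b k
  have hYmeas (k : ℕ) : Measurable (Y k) := ((hmeas k).sub_const _).div_const _
  have hYL2 (k : ℕ) : MemLp (Y k) 2 μ := by
    simpa only [Y, div_eq_mul_inv, Pi.sub_apply] using
      ((hL2 k).sub (memLp_const μ[ξ k])).mul_const (b k)⁻¹
  have hYindep : iIndepFun Y μ :=
    hindep.comp _ fun k => (measurable_id.sub_const _).div_const _
  have hYmean (k : ℕ) : μ[Y k] = 0 := by
    simp [Y, integral_div, integral_sub ((hL2 k).integrable one_le_two) (integrable_const _)]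
  have hYvar (k : ℕ) : Var[Y k; μ] = Var[ξ k; μ] / b k ^ 2 := by
    simp_rw [Y, div_eq_mul_inv, variance_mul_const,
      variance_sub_const (hL2 k).aestronglyMeasurable, inv_pow]
  filter_upwards [hYindep.ae_exists_tendsto_sum_of_summable_variance hYmeas hYL2 hYmean
    (by simpa only [hYvar] using hsum)] with ω ⟨c, hc⟩
  exact (isLittleO_sum_range_of_tendsto_sum_range_div hmono hbpos hbtop hc).tendsto_div_nhds_zero

/-- Law of large numbers for independent sequences: if `(ξ_n)` are independent with
finite variances, `b_n` increasing to `∞` and `∑ Var(ξ_n)/b_n² < ∞`, then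
`(∑_{k<n} (ξ_k - Eξ_k))/b_n → 0` almost surely. -/
theorem stmt9 {Ω : Type*} [MeasurableSpace Ω] (μ : Measure Ω) [IsProbabilityMeasure μ]
    (ξ : ℕ → Ω → ℝ) (hmeas : ∀ n, Measurable (ξ n))
    (hL2 : ∀ n, MemLp (ξ n) 2 μ)
    (hindep : iIndepFun ξ μ)
    (b : ℕ → ℝ) (hmono : Monotone b) (hbpos : ∀ n, 0 < b n)
    (hbtop : Tendsto b atTop atTop)
    (hsum : Summable fun n => variance (ξ n) μ / (b n) ^ 2) :
    ∀ᵐ ω ∂μ, Tendsto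
      (fun n => (∑ k ∈ Finset.range n, (ξ k ω - μ[ξ k])) / b n) atTop (nhds 0) :=
  stmt9_general μ ξ hmeas hL2 hindep b hmono hbpos hbtop hsum
end
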